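/- arXiv:1708.00900 — 4 statements merged into one kernel-verified Lean document; each statement's English description precedes it below -/
import Mathlib

section
/- Let p ≥ 2 and ε > 0 be real numbers, and define L_ε : ℝⁿ → ℝ by L_ε(w) = (1/p)(ε² + |w|²)^{p/2}. Then L_ε is uniformly elliptic in the following sense: for all v, w ∈ ℝⁿ, (ε² + |w|²)^{(p−2)/2} |v|² ≤ D²L_ε(w)[v, v] ≤ (p−1)(ε² + |w|²)^{(p−2)/2} |v|², where D²L_ε(w) denotes the second derivative of L_ε at w viewed as a symmetric bilinear form. -/
/-!
Differentiating twice gives the Hessian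
`D²L(w)[v,v] = g^{(p-2)/2} |v|² + (p-2) g^{(p-4)/2} ⟨w,v⟩²` with `g = ε² + |w|²`.
For `p ≥ 2` the second term lies between `0` and `(p-2) g^{(p-2)/2} |v|²`,
since Cauchy–Schwarz gives `⟨w,v⟩² ≤ |w|² |v|² ≤ g |v|²`.
-/

open Real
open scoped RealInnerProductSpace

section Hessian

variable {E : Type*} [NormedAddCommGroup E] [InnerProductSpace ℝ E]

theorem hasFDerivAt_add_norm_sq_rpow {c : ℝ} (hc : 0 < c) (s : ℝ) (w : E) :
    HasFDerivAt (fun w : E => (c + ‖w‖ ^ 2) ^ s)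
      ((2 * s * (c + ‖w‖ ^ 2) ^ (s - 1)) • innerSL ℝ w) w := by
  have h := ((hasStrictFDerivAt_norm_sq w).hasFDerivAt.const_add c).rpow_const (p := s)
    (Or.inl (by positivity))
  convert h using 1
  ext v
  simp only [smul_apply, smul_eq_mul, innerSL_apply_apply]
  ring

theorem fderiv_add_norm_sq_rpow_div {c p : ℝ} (hc : 0 < c) (hp : p ≠ 0) :
    fderiv ℝ (fun w : E => (1 / p) * (c + ‖w‖ ^ 2) ^ (p / 2)) =
      fun w => (c + ‖w‖ ^ 2) ^ ((p - 2) / 2) • innerSL ℝ w := by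
  funext w
  refine ((hasFDerivAt_add_norm_sq_rpow hc (p / 2) w).const_mul (1 / p)).fderiv.trans ?_
  ext v
  simp only [smul_apply, smul_eq_mul, innerSL_apply_apply]
  field_simp

theorem fderiv_fderiv_add_norm_sq_rpow_div_apply {c p : ℝ} (hc : 0 < c) (hp : p ≠ 0)
    (w v : E) :
    fderiv ℝ (fderiv ℝ (fun w : E => (1 / p) * (c + ‖w‖ ^ 2) ^ (p / 2))) w v v =
      (c + ‖w‖ ^ 2) ^ ((p - 2) / 2) * ‖v‖ ^ 2 +
        (p - 2) * (c + ‖w‖ ^ 2) ^ ((p - 4) / 2) * ⟪w, v⟫ ^ 2 := by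
  have h : HasFDerivAt (fun w : E => (c + ‖w‖ ^ 2) ^ ((p - 2) / 2) • innerSL ℝ w) _ w :=
    (hasFDerivAt_add_norm_sq_rpow hc ((p - 2) / 2) w).smul (innerSL ℝ (E := E)).hasFDerivAt
  rw [fderiv_add_norm_sq_rpow_div hc hp, h.fderiv]
  simp only [add_apply, smul_apply, ContinuousLinearMap.smulRight_apply, smul_eq_mul,
    innerSL_apply_apply]
  rw [innerSL_apply_apply, real_inner_self_eq_norm_sq, show (p - 2) / 2 - 1 = (p - 4) / 2 by ring]
  ring

theorem real_inner_sq_le_add_norm_sq_mul {c : ℝ} (hc : 0 ≤ c) (w v : E) :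
    ⟪w, v⟫ ^ 2 ≤ (c + ‖w‖ ^ 2) * ‖v‖ ^ 2 := by
  have h := real_inner_mul_inner_self_le w v
  rw [real_inner_self_eq_norm_sq, real_inner_self_eq_norm_sq] at h
  nlinarith [mul_nonneg hc (sq_nonneg ‖v‖)]

end Hessian

theorem rpow_hessian_form_bounds {g N q p : ℝ} (hg : 0 < g) (hp : 2 ≤ p) (hq0 : 0 ≤ q)
    (hq : q ≤ g * N) :
    g ^ ((p - 2) / 2) * N ≤ g ^ ((p - 2) / 2) * N + (p - 2) * g ^ ((p - 4) / 2) * q ∧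
      g ^ ((p - 2) / 2) * N + (p - 2) * g ^ ((p - 4) / 2) * q ≤
        (p - 1) * g ^ ((p - 2) / 2) * N := by
  have hpow : g ^ ((p - 2) / 2) = g ^ ((p - 4) / 2) * g := by
    rw [← rpow_add_one hg.ne']
    ring_nf
  have hcoeff : 0 ≤ (p - 2) * g ^ ((p - 4) / 2) := mul_nonneg (by linarith) (by positivity)
  constructor
  · nlinarith [mul_nonneg hcoeff hq0]
  · rw [hpow]
    nlinarith [mul_le_mul_of_nonneg_left hq hcoeff]

/-- Lemma (L-properties, part (c), ellipticity): the regularized p-Dirichlet integrand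
`L_ε(w) = (1/p)(ε² + |w|²)^{p/2}` is uniformly elliptic:
`(ε²+|w|²)^{(p−2)/2}|v|² ≤ D²L_ε(w)[v,v] ≤ (p−1)(ε²+|w|²)^{(p−2)/2}|v|²`. -/
theorem regularized_integrand_elliptic (n : ℕ) (p ε : ℝ) (hp : 2 ≤ p) (hε : 0 < ε) :
    ∀ w v : EuclideanSpace ℝ (Fin n),
      (ε ^ 2 + ‖w‖ ^ 2) ^ ((p - 2) / 2) * ‖v‖ ^ 2 ≤
        (fderiv ℝ
          (fderiv ℝ
            (fun w : EuclideanSpace ℝ (Fin n) => (1 / p) * (ε ^ 2 + ‖w‖ ^ 2) ^ (p / 2)))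
          w v) v ∧
      (fderiv ℝ
          (fderiv ℝ
            (fun w : EuclideanSpace ℝ (Fin n) => (1 / p) * (ε ^ 2 + ‖w‖ ^ 2) ^ (p / 2)))
          w v) v ≤
        (p - 1) * (ε ^ 2 + ‖w‖ ^ 2) ^ ((p - 2) / 2) * ‖v‖ ^ 2 := by
  intro w v
  rw [fderiv_fderiv_add_norm_sq_rpow_div_apply (by positivity) (by linarith)]
  exact rpow_hessian_form_bounds (by positivity) hp (sq_nonneg _)
    (real_inner_sq_le_add_norm_sq_mul (sq_nonneg ε) w v)
end

section
/- Let n ≥ 1 be an integer and let p, q be real numbers with p ≥ 2 and 2 ≤ q ≤ 3. Then for every real n×n matrix A and every vector v ∈ ℝⁿ with |v| ≤ 1, ‖A‖² + (p−q)|Av|² − (p−2)(q−2) ⟨Av, v⟩² ≥ min(1, (p−1)(3−q)) · ‖A‖², where ‖A‖ denotes the Hilbert–Schmidt (Frobenius) norm of A, |Av| the Euclidean norm of the vector Av, and ⟨·,·⟩ the Euclidean inner product. -/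
/-- The pointwise coercivity inequality underlying the a priori estimate in the proof of
Lemma (unif-bounds, b): for a real n×n matrix `A` and a vector `v` with `|v| ≤ 1`,
`‖A‖² + (p−q)|Av|² − (p−2)(q−2)⟨Av,v⟩² ≥ min(1, (p−1)(3−q)) ‖A‖²`
(Frobenius norm, Euclidean norm and inner product). -/
theorem pointwise_coercivity (n : ℕ) (hn : 1 ≤ n) (p q : ℝ)
    (hp : 2 ≤ p) (hq1 : 2 ≤ q) (hq2 : q ≤ 3)
    (A : Matrix (Fin n) (Fin n) ℝ) (v : Fin n → ℝ) (hv : ∑ i, v i ^ 2 ≤ 1) :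
    min 1 ((p - 1) * (3 - q)) * (∑ i, ∑ j, A i j ^ 2) ≤
      (∑ i, ∑ j, A i j ^ 2) + (p - q) * (∑ i, A.mulVec v i ^ 2) -
        (p - 2) * (q - 2) * (∑ i, A.mulVec v i * v i) ^ 2 := by
  set S := ∑ i, ∑ j, A i j ^ 2 with hS
  set T := ∑ i, A.mulVec v i ^ 2 with hT
  set U := (∑ i, A.mulVec v i * v i) ^ 2 with hU
  have hvnn : (0:ℝ) ≤ ∑ i, v i ^ 2 := Finset.sum_nonneg fun i _ => sq_nonneg _
  have hSnn : 0 ≤ S := Finset.sum_nonneg fun i _ => Finset.sum_nonneg fun j _ => sq_nonneg _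
  have hTnn : 0 ≤ T := Finset.sum_nonneg fun i _ => sq_nonneg _
  have hUT : U ≤ T := by
    calc U ≤ (∑ i, A.mulVec v i ^ 2) * (∑ i, v i ^ 2) :=
          Finset.sum_mul_sq_le_sq_mul_sq _ _ _
      _ ≤ T * 1 := by
          apply mul_le_mul_of_nonneg_left hv hTnn
      _ = T := mul_one T
  have hTS : T ≤ S := by
    rw [hT, hS]
    apply Finset.sum_le_sum
    intro i _
    calc A.mulVec v i ^ 2 = (∑ j, A i j * v j) ^ 2 := by
          simp [Matrix.mulVec, dotProduct]
      _ ≤ (∑ j, A i j ^ 2) * (∑ j, v j ^ 2) := Finset.sum_mul_sq_le_sq_mul_sq _ _ _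
      _ ≤ (∑ j, A i j ^ 2) * 1 := by
          apply mul_le_mul_of_nonneg_left hv (Finset.sum_nonneg fun j _ => sq_nonneg _)
      _ = _ := mul_one _
  have hpq : 0 ≤ (p - 2) * (q - 2) := mul_nonneg (by linarith) (by linarith)
  rcases le_or_gt 1 ((p - 1) * (3 - q)) with h | h
  · rw [min_eq_left h]
    nlinarith [mul_le_mul_of_nonneg_left hUT hpq]
  · rw [min_eq_right h.le]
    nlinarith [mul_le_mul_of_nonneg_left hUT hpq]
end

section
/- Let n, k ≥ 1 be integers, θ ∈ (0,1), M > 0, and let β : ℝ^k → ℝ^k be θ-Hölder continuous with constant M, i.e. |β(w) − β(v)| ≤ M|w−v|^θ for all w, v ∈ ℝ^k. Let Ω ⊆ ℝⁿ be open, let Ω' be an open set whose closure is a compact subset of Ω, and set δ = dist(Ω', ∂Ω) > 0. Let V : Ω → ℝ^k be C¹ with ∫_Ω ‖DV‖² dx ≤ K² for some K > 0, where ‖DV‖ denotes the Hilbert–Schmidt norm of the derivative. Then there is a constant C depending only on n such that for every vector v ∈ ℝⁿ with 0 < |v| ≤ δ, ∫_{Ω'} |β(V(x+v)) − β(V(x))|^{2/θ}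 dx ≤ C · M^{2/θ} K² |v|². -/
/-
Hölder continuity turns `|β(V(x+v)) - β(V x)|^(2/θ)` into `M^(2/θ) |V(x+v) - V x|²`. On the segment
from `x` to `x + v` the fundamental theorem of calculus and Cauchy–Schwarz bound this square by
`∫₀¹ |DV(x+tv) v|² dt ≤ |v|² ∫₀¹ ‖DV(x+tv)‖²_HS dt`. Integrating over `Ω'` and exchanging the
integrals, every translate `Ω' + tv` with `0 < t ≤ 1` lies in `Ω` since `|tv| ≤ dist(Ω', ∂Ω)`, so
translation invariance of Lebesgue measure gives the bound `M^(2/θ) |v|² K²`, i.e. `C = 1`.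
-/

open Real MeasureTheory Set Filter Topology
open scoped ENNReal

theorem ENNReal.sq_lintegral_le_lintegral_sq {α : Type*} [MeasurableSpace α] (μ : Measure α)
    [IsProbabilityMeasure μ] {f : α → ℝ≥0∞} (hf : AEMeasurable f μ) :
    (∫⁻ a, f a ∂μ) ^ 2 ≤ ∫⁻ a, f a ^ 2 ∂μ := by
  have h := ENNReal.lintegral_mul_le_Lp_mul_Lq μ .two_two hf aemeasurable_const (g := fun _ => 1)
  simp only [Pi.mul_apply, mul_one, lintegral_const, measure_univ, ENNReal.rpow_two] at h
  calc (∫⁻ a, f a ∂μ) ^ 2 ≤ ((∫⁻ a, f a ^ 2 ∂μ) ^ (1 / 2 : ℝ)) ^ 2 := by gcongr; simpa using h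
    _ = ∫⁻ a, f a ^ 2 ∂μ := by
      rw [← ENNReal.rpow_natCast, ← ENNReal.rpow_mul]; norm_num

theorem setLIntegral_comp_add_right_le {G : Type*} [AddGroup G] [MeasurableSpace G]
    [MeasurableAdd G] {μ : Measure G} [μ.IsAddRightInvariant] (g : G → ℝ≥0∞) {s t : Set G}
    {c : G} (hst : ∀ x ∈ s, x + c ∈ t) : ∫⁻ x in s, g (x + c) ∂μ ≤ ∫⁻ y in t, g y ∂μ :=
  calc ∫⁻ x in s, g (x + c) ∂μ ≤ ∫⁻ x in (· + c) ⁻¹' t, g (x + c) ∂μ := lintegral_mono_set hst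
    _ = ∫⁻ y in t, g y ∂μ := (measurePreserving_add_right μ c).setLIntegral_comp_preimage_emb
        (measurableEmbedding_addRight c) g t

theorem lintegral_lintegral_add_smul_le {E : Type*} [NormedAddCommGroup E] [NormedSpace ℝ E]
    [MeasurableSpace E] [BorelSpace E] {μ : Measure E} [μ.IsAddRightInvariant] [SFinite μ]
    {g : E → ℝ≥0∞} (hg : Measurable g) {s t : Set E} {v : E}
    (hst : ∀ x ∈ s, ∀ τ ∈ Ioc (0 : ℝ) 1, x + τ • v ∈ t) :
    ∫⁻ x in s, (∫⁻ τ in Ioc (0 : ℝ) 1, g (x + τ • v)) ∂μ ≤ ∫⁻ y in t, g y ∂μ := by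
  have hmeas : Measurable fun p : E × ℝ => g (p.1 + p.2 • v) :=
    hg.comp (by fun_prop : Continuous fun p : E × ℝ => p.1 + p.2 • v).measurable
  calc ∫⁻ x in s, (∫⁻ τ in Ioc (0 : ℝ) 1, g (x + τ • v)) ∂μ
      = ∫⁻ τ in Ioc (0 : ℝ) 1, ∫⁻ x in s, g (x + τ • v) ∂μ :=
        lintegral_lintegral_swap hmeas.aemeasurable
    _ ≤ ∫⁻ τ in Ioc (0 : ℝ) 1, ∫⁻ y in t, g y ∂μ :=
        setLIntegral_mono' measurableSet_Ioc fun τ hτ =>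
          setLIntegral_comp_add_right_le g fun x hx => hst x hx τ hτ
    _ = ∫⁻ y in t, g y ∂μ := by simp

section Geometry

variable {E : Type*} [NormedAddCommGroup E] [NormedSpace ℝ E]

theorem IsOpen.ball_subset_of_le_dist_frontier {Ω : Set E} (hΩ : IsOpen Ω) {x : E} (hx : x ∈ Ω)
    {δ : ℝ} (hδ : ∀ y ∈ frontier Ω, δ ≤ dist x y) : Metric.ball x δ ⊆ Ω := by
  rcases le_or_gt δ 0 with hδ0 | hδ0
  · simp [Metric.ball_eq_empty.2 hδ0]
  refine (convex_ball x δ).isPreconnected.subset_of_closure_inter_subset hΩ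
    ⟨x, Metric.mem_ball_self hδ0, hx⟩ ?_
  rintro y ⟨hyΩ, hyδ⟩
  by_contra hy
  exact (hδ y ⟨hyΩ, by rwa [hΩ.interior_eq]⟩).not_gt (by rwa [dist_comm, ← Metric.mem_ball])

theorem closedBall_subset_of_le_dist_frontier {Ω Ω' : Set E} (hΩ : IsOpen Ω) (hΩ' : IsOpen Ω')
    (hsub : Ω' ⊆ Ω) {δ : ℝ} (hδ : 0 < δ) (hdist : ∀ x ∈ Ω', ∀ y ∈ frontier Ω, δ ≤ dist x y)
    {x : E} (hx : x ∈ Ω') : Metric.closedBall x δ ⊆ Ω := by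
  intro y hy
  -- `y` may be at distance exactly `δ` from `x`, but it is closer than `δ` to points of `Ω'`
  -- near `x`
  have hnear : ∀ᶠ ε in 𝓝[>] (0 : ℝ), x + ε • (y - x) ∈ Ω' ∧ ε < 1 := by
    have hcont : Tendsto (fun ε : ℝ => x + ε • (y - x)) (𝓝 0) (𝓝 x) :=
      Continuous.tendsto' (by fun_prop) 0 x (by simp)
    exact ((hcont.eventually_mem (hΩ'.mem_nhds hx)).and
      (eventually_lt_nhds zero_lt_one)).filter_mono nhdsWithin_le_nhds
  obtain ⟨ε, ⟨hεΩ', hε1⟩, hε0⟩ := (hnear.and self_mem_nhdsWithin).exists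
  refine hΩ.ball_subset_of_le_dist_frontier (hsub hεΩ') (hdist _ hεΩ') ?_
  rw [Metric.mem_ball, dist_eq_norm, show y - (x + ε • (y - x)) = (1 - ε) • (y - x) by module,
    norm_smul, Real.norm_of_nonneg (by linarith), ← dist_eq_norm]
  nlinarith [Metric.mem_closedBall.1 hy, dist_nonneg (x := y) (y := x)]

end Geometry

section Calculus

variable {E F : Type*} [NormedAddCommGroup E] [NormedSpace ℝ E]
  [NormedAddCommGroup F] [NormedSpace ℝ F]

theorem sub_eq_intervalIntegral_fderiv [CompleteSpace F] {V : E → F} {x v : E}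
    (hV : ∀ t ∈ Icc (0 : ℝ) 1, ContDiffAt ℝ 1 V (x + t • v)) :
    V (x + v) - V x = ∫ t in (0 : ℝ)..1, fderiv ℝ V (x + t • v) v := by
  rw [sub_eq_iff_eq_add']
  simpa using map_add_eq_sum_add_integral_iteratedFDeriv (n := 0) (by simpa using hV)

theorem enorm_sub_sq_le_lintegral_fderiv [CompleteSpace F] {V : E → F} {Ω : Set E}
    (hΩ : IsOpen Ω) (hV : ContDiffOn ℝ 1 V Ω) {x v : E}
    (hseg : ∀ t ∈ Icc (0 : ℝ) 1, x + t • v ∈ Ω) :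
    ‖V (x + v) - V x‖ₑ ^ 2 ≤ ∫⁻ t in Ioc (0 : ℝ) 1, ‖fderiv ℝ V (x + t • v) v‖ₑ ^ 2 := by
  have hcont : ContinuousOn (fun t : ℝ => fderiv ℝ V (x + t • v) v) (Icc 0 1) :=
    ((hV.continuousOn_fderiv_of_isOpen hΩ le_rfl).comp (by fun_prop) hseg).clm_apply
      continuousOn_const
  have : IsProbabilityMeasure (volume.restrict (Ioc (0 : ℝ) 1)) := ⟨by simp⟩
  calc ‖V (x + v) - V x‖ₑ ^ 2
      ≤ (∫⁻ t in Ioc (0 : ℝ) 1, ‖fderiv ℝ V (x + t • v) v‖ₑ) ^ 2 := by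
        rw [sub_eq_intervalIntegral_fderiv fun t ht => hV.contDiffAt (hΩ.mem_nhds (hseg t ht)),
          intervalIntegral.integral_of_le zero_le_one]
        gcongr
        exact enorm_integral_le_lintegral_enorm _
    _ ≤ _ := ENNReal.sq_lintegral_le_lintegral_sq _
        ((hcont.mono Ioc_subset_Icc_self).enorm.aemeasurable measurableSet_Ioc)

end Calculus

theorem ContinuousLinearMap.norm_apply_sq_le_sum {ι F : Type*} [Fintype ι] [DecidableEq ι]
    [NormedAddCommGroup F] [NormedSpace ℝ F] (L : EuclideanSpace ℝ ι →L[ℝ] F)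
    (w : EuclideanSpace ℝ ι) :
    ‖L w‖ ^ 2 ≤ ‖w‖ ^ 2 * ∑ i, ‖L (EuclideanSpace.single i 1)‖ ^ 2 := by
  have hw : L w = ∑ i, w i • L (EuclideanSpace.single i 1) := by
    conv_lhs => rw [← (EuclideanSpace.basisFun ι ℝ).sum_repr w]
    simp [map_sum]
  calc ‖L w‖ ^ 2 ≤ (∑ i, |w i| * ‖L (EuclideanSpace.single i 1)‖) ^ 2 := by
        rw [hw]; gcongr
        exact (norm_sum_le _ _).trans_eq (by simp [norm_smul])
    _ ≤ (∑ i, |w i| ^ 2) * ∑ i, ‖L (EuclideanSpace.single i 1)‖ ^ 2 :=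
        Finset.sum_mul_sq_le_sq_mul_sq _ _ _
    _ = _ := by simp [EuclideanSpace.norm_sq_eq]

theorem norm_sub_rpow_le_of_holder {F G : Type*} [SeminormedAddCommGroup F]
    [SeminormedAddCommGroup G] {β : F → G} {M θ : ℝ} (hM : 0 ≤ M) (hθ : 0 < θ)
    (hβ : ∀ a b, ‖β a - β b‖ ≤ M * ‖a - b‖ ^ θ) (a b : F) :
    ‖β a - β b‖ ^ (2 / θ) ≤ M ^ (2 / θ) * ‖a - b‖ ^ 2 := by
  calc ‖β a - β b‖ ^ (2 / θ) ≤ (M * ‖a - b‖ ^ θ) ^ (2 / θ) := by gcongr; exact hβ a b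
    _ = M ^ (2 / θ) * ‖a - b‖ ^ 2 := by
      rw [Real.mul_rpow hM (by positivity), ← Real.rpow_mul (norm_nonneg _),
        mul_div_cancel₀ _ hθ.ne', Real.rpow_two]

section HolderComposition

variable {ι F G : Type*} [Fintype ι] [DecidableEq ι] [NormedAddCommGroup F] [NormedSpace ℝ F]
  [CompleteSpace F] [MeasurableSpace F] [BorelSpace F] [SeminormedAddCommGroup G]
  {V : EuclideanSpace ℝ ι → F} {β : F → G} {M θ : ℝ} {Ω Ω' : Set (EuclideanSpace ℝ ι)}
  {v : EuclideanSpace ℝ ι}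

theorem lintegral_holder_comp_sub_le (hM : 0 ≤ M) (hθ : 0 < θ)
    (hβ : ∀ a b, ‖β a - β b‖ ≤ M * ‖a - b‖ ^ θ) (hΩ : IsOpen Ω) (hV : ContDiffOn ℝ 1 V Ω)
    (hΩ' : MeasurableSet Ω') (hmem : ∀ x ∈ Ω', ∀ τ ∈ Icc (0 : ℝ) 1, x + τ • v ∈ Ω) :
    ∫⁻ x in Ω', ENNReal.ofReal (‖β (V (x + v)) - β (V x)‖ ^ (2 / θ)) ≤
      ENNReal.ofReal (M ^ (2 / θ)) * ‖v‖ₑ ^ 2 *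
        ∫⁻ y in Ω, ENNReal.ofReal (∑ i, ‖fderiv ℝ V y (EuclideanSpace.single i 1)‖ ^ 2) := by
  set S := fun y => ∑ i, ‖fderiv ℝ V y (EuclideanSpace.single i 1)‖ ^ 2
  set c := ENNReal.ofReal (M ^ (2 / θ)) * ‖v‖ₑ ^ 2
  have hS : Measurable fun y => ENNReal.ofReal (S y) :=
    ENNReal.measurable_ofReal.comp <| Finset.measurable_sum _ fun i _ =>
      (measurable_fderiv_apply_const ℝ V _).norm.pow_const 2
  have hpoint : ∀ x ∈ Ω', ENNReal.ofReal (‖β (V (x + v)) - β (V x)‖ ^ (2 / θ)) ≤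
      c * ∫⁻ τ in Ioc (0 : ℝ) 1, ENNReal.ofReal (S (x + τ • v)) := by
    intro x hx
    calc ENNReal.ofReal (‖β (V (x + v)) - β (V x)‖ ^ (2 / θ))
        ≤ ENNReal.ofReal (M ^ (2 / θ)) * ‖V (x + v) - V x‖ₑ ^ 2 := by
          rw [← ofReal_norm, ← ENNReal.ofReal_pow (norm_nonneg _),
            ← ENNReal.ofReal_mul (by positivity)]
          exact ENNReal.ofReal_le_ofReal (norm_sub_rpow_le_of_holder hM hθ hβ _ _)
      _ ≤ ENNReal.ofReal (M ^ (2 / θ)) *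
            ∫⁻ τ in Ioc (0 : ℝ) 1, ‖fderiv ℝ V (x + τ • v) v‖ₑ ^ 2 := by
          gcongr
          exact enorm_sub_sq_le_lintegral_fderiv hΩ hV (hmem x hx)
      _ ≤ ENNReal.ofReal (M ^ (2 / θ)) *
            ∫⁻ τ in Ioc (0 : ℝ) 1, ‖v‖ₑ ^ 2 * ENNReal.ofReal (S (x + τ • v)) := by
          gcongr with τ
          rw [← ofReal_norm, ← ofReal_norm, ← ENNReal.ofReal_pow (norm_nonneg _),
            ← ENNReal.ofReal_pow (norm_nonneg _), ← ENNReal.ofReal_mul (by positivity)]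
          exact ENNReal.ofReal_le_ofReal ((fderiv ℝ V (x + τ • v)).norm_apply_sq_le_sum v)
      _ = c * ∫⁻ τ in Ioc (0 : ℝ) 1, ENNReal.ofReal (S (x + τ • v)) := by
          rw [lintegral_const_mul' _ _ (by simp), mul_assoc]
  calc ∫⁻ x in Ω', ENNReal.ofReal (‖β (V (x + v)) - β (V x)‖ ^ (2 / θ))
      ≤ ∫⁻ x in Ω', c * ∫⁻ τ in Ioc (0 : ℝ) 1, ENNReal.ofReal (S (x + τ • v)) :=
        setLIntegral_mono' hΩ' hpoint
    _ = c * ∫⁻ x in Ω', ∫⁻ τ in Ioc (0 : ℝ) 1, ENNReal.ofReal (S (x + τ • v)) :=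
        lintegral_const_mul' _ _ (ENNReal.mul_ne_top ENNReal.ofReal_ne_top (by simp))
    _ ≤ c * ∫⁻ y in Ω, ENNReal.ofReal (S y) :=
        mul_le_mul_right (lintegral_lintegral_add_smul_le hS fun x hx τ hτ =>
          hmem x hx τ (Ioc_subset_Icc_self hτ)) c

theorem integral_holder_comp_sub_le (hM : 0 ≤ M) (hθ : 0 < θ)
    (hβ : ∀ a b, ‖β a - β b‖ ≤ M * ‖a - b‖ ^ θ) (hΩ : IsOpen Ω) (hV : ContDiffOn ℝ 1 V Ω)
    (hΩ' : MeasurableSet Ω') (hmem : ∀ x ∈ Ω', ∀ τ ∈ Icc (0 : ℝ) 1, x + τ • v ∈ Ω)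
    (hS : IntegrableOn (fun y => ∑ i, ‖fderiv ℝ V y (EuclideanSpace.single i 1)‖ ^ 2) Ω) :
    ∫ x in Ω', ‖β (V (x + v)) - β (V x)‖ ^ (2 / θ) ≤
      M ^ (2 / θ) * ‖v‖ ^ 2 * ∫ y in Ω, ∑ i, ‖fderiv ℝ V y (EuclideanSpace.single i 1)‖ ^ 2 := by
  have hS0 : 0 ≤ ∫ y in Ω, ∑ i, ‖fderiv ℝ V y (EuclideanSpace.single i 1)‖ ^ 2 :=
    integral_nonneg fun y => by positivity
  refine (Real.le_norm_self _).trans <| (norm_integral_le_lintegral_norm _).trans <|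
    ENNReal.toReal_le_of_le_ofReal (by positivity) ?_
  simp only [Real.norm_eq_abs, Real.abs_rpow_of_nonneg (norm_nonneg _), abs_norm]
  refine (lintegral_holder_comp_sub_le hM hθ hβ hΩ hV hΩ' hmem).trans_eq ?_
  rw [← ofReal_integral_eq_lintegral_ofReal hS (ae_of_all _ fun y => by positivity),
    ENNReal.ofReal_mul (by positivity), ENNReal.ofReal_mul (by positivity),
    ENNReal.ofReal_pow (norm_nonneg _), ofReal_norm]

end HolderComposition

theorem fractional_differentiability_general (n : ℕ) :
    ∃ C > 0, ∀ k : ℕ, 1 ≤ k → ∀ θ : ℝ, θ ∈ Set.Ioo (0 : ℝ) 1 → ∀ M : ℝ, 0 < M →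
      ∀ β : EuclideanSpace ℝ (Fin k) → EuclideanSpace ℝ (Fin k),
        (∀ w v : EuclideanSpace ℝ (Fin k), ‖β w - β v‖ ≤ M * ‖w - v‖ ^ θ) →
      ∀ Ω Ω' : Set (EuclideanSpace ℝ (Fin n)), IsOpen Ω → IsOpen Ω' →
        IsCompact (closure Ω') → closure Ω' ⊆ Ω →
      ∀ δ : ℝ, δ = sInf (Set.image2 dist Ω' (frontier Ω)) → 0 < δ →
      ∀ V : EuclideanSpace ℝ (Fin n) → EuclideanSpace ℝ (Fin k),
        ContDiffOn ℝ 1 V Ω →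
      ∀ K : ℝ, 0 < K →
        IntegrableOn (fun x => ∑ i, ‖fderiv ℝ V x (EuclideanSpace.single i 1)‖ ^ 2) Ω →
        (∫ x in Ω, ∑ i, ‖fderiv ℝ V x (EuclideanSpace.single i 1)‖ ^ 2) ≤ K ^ 2 →
      ∀ v : EuclideanSpace ℝ (Fin n), 0 < ‖v‖ → ‖v‖ ≤ δ →
        (∫ x in Ω', ‖β (V (x + v)) - β (V x)‖ ^ (2 / θ)) ≤
          C * M ^ (2 / θ) * K ^ 2 * ‖v‖ ^ 2 := by
  refine ⟨1, one_pos, ?_⟩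
  intro k _ θ hθ M hM β hβ Ω Ω' hΩ hΩ' _ hcl δ hδ hδ0 V hV K _ hS hSK v _ hvδ
  have hdist : ∀ x ∈ Ω', ∀ y ∈ frontier Ω, δ ≤ dist x y := fun x hx y hy =>
    hδ ▸ csInf_le ⟨0, by rintro _ ⟨a, -, b, -, rfl⟩; exact dist_nonneg⟩ (mem_image2_of_mem hx hy)
  have hmem : ∀ x ∈ Ω', ∀ τ ∈ Icc (0 : ℝ) 1, x + τ • v ∈ Ω := by
    intro x hx τ hτ
    refine closedBall_subset_of_le_dist_frontier hΩ hΩ' (subset_closure.trans hcl) hδ0 hdist hx ?_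
    rw [Metric.mem_closedBall, dist_self_add_left, norm_smul, Real.norm_of_nonneg hτ.1]
    exact (mul_le_of_le_one_left (norm_nonneg v) hτ.2).trans hvδ
  calc _ ≤ M ^ (2 / θ) * ‖v‖ ^ 2 *
        ∫ y in Ω, ∑ i, ‖fderiv ℝ V y (EuclideanSpace.single i 1)‖ ^ 2 :=
      integral_holder_comp_sub_le hM.le hθ.1 hβ hΩ hV hΩ'.measurableSet hmem hS
    _ ≤ M ^ (2 / θ) * ‖v‖ ^ 2 * K ^ 2 := by gcongr
    _ = 1 * M ^ (2 / θ) * K ^ 2 * ‖v‖ ^ 2 := by ring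

/-- The fractional differentiability lemma (Lemma 5.1 of the paper): if `β` is θ-Hölder
with constant `M` and `V` is `C¹` with `∫_Ω ‖DV‖² ≤ K²`, then for `Ω' ⋐ Ω`,
`δ = dist(Ω', ∂Ω)` and every translation `v` with `0 < |v| ≤ δ`,
`∫_{Ω'} |β(V(x+v)) − β(V(x))|^{2/θ} dx ≤ C M^{2/θ} K² |v|²`, with `C = C(n)`. -/
theorem fractional_differentiability (n : ℕ) (hn : 1 ≤ n) :
    ∃ C > 0, ∀ k : ℕ, 1 ≤ k → ∀ θ : ℝ, θ ∈ Set.Ioo (0 : ℝ) 1 → ∀ M : ℝ, 0 < M →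
      ∀ β : EuclideanSpace ℝ (Fin k) → EuclideanSpace ℝ (Fin k),
        (∀ w v : EuclideanSpace ℝ (Fin k), ‖β w - β v‖ ≤ M * ‖w - v‖ ^ θ) →
      ∀ Ω Ω' : Set (EuclideanSpace ℝ (Fin n)), IsOpen Ω → IsOpen Ω' →
        IsCompact (closure Ω') → closure Ω' ⊆ Ω →
      ∀ δ : ℝ, δ = sInf (Set.image2 dist Ω' (frontier Ω)) → 0 < δ →
      ∀ V : EuclideanSpace ℝ (Fin n) → EuclideanSpace ℝ (Fin k),
        ContDiffOn ℝ 1 V Ω →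
      ∀ K : ℝ, 0 < K →
        IntegrableOn (fun x => ∑ i, ‖fderiv ℝ V x (EuclideanSpace.single i 1)‖ ^ 2) Ω →
        (∫ x in Ω, ∑ i, ‖fderiv ℝ V x (EuclideanSpace.single i 1)‖ ^ 2) ≤ K ^ 2 →
      ∀ v : EuclideanSpace ℝ (Fin n), 0 < ‖v‖ → ‖v‖ ≤ δ →
        (∫ x in Ω', ‖β (V (x + v)) - β (V x)‖ ^ (2 / θ)) ≤
          C * M ^ (2 / θ) * K ^ 2 * ‖v‖ ^ 2 :=
  fractional_differentiability_general n
end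

section
/- Let k ≥ 1 be an integer and let s ≥ 1 be a real number. Then for all w, v ∈ ℝ^k, | |w|^{s−1} w − |v|^{s−1} v | ≥ 2^{−s} |w − v|^s, where for w = 0 the expression |w|^{s−1}w is interpreted as 0. -/
/-!
Write `d = w - v`, `a = ‖w‖^{s-1}`, `b = ‖v‖^{s-1}`. The polarisation-type identity
`⟪a w - b v, d⟫ = (a + b)/2 ‖d‖² + (a - b)/2 (‖w‖² - ‖v‖²)` and the monotonicity of `t ↦ t^{s-1}`
give `⟪a w - b v, d⟫ ≥ (a + b)/2 ‖d‖²`, while `‖d‖ ≤ ‖w‖ + ‖v‖ ≤ 2 max(‖w‖, ‖v‖)` gives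
`(a + b)/2 ≥ 2^{-s} ‖d‖^{s-1}`. Cauchy–Schwarz then cancels one factor `‖d‖`.
-/

open Real RealInnerProductSpace

lemma Real.add_rpow_le_two_rpow_mul_add {x y p : ℝ} (hx : 0 ≤ x) (hy : 0 ≤ y) (hp : 0 ≤ p) :
    (x + y) ^ p ≤ 2 ^ p * (x ^ p + y ^ p) := by
  have hmax : max x y ^ p ≤ x ^ p + y ^ p := by
    rcases max_choice x y with h | h <;> rw [h]
    · linarith [rpow_nonneg hy p]
    · linarith [rpow_nonneg hx p]
  calc (x + y) ^ p ≤ (2 * max x y) ^ p := by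
        gcongr
        linarith [le_max_left x y, le_max_right x y]
    _ = 2 ^ p * max x y ^ p := mul_rpow zero_le_two (le_max_of_le_left hx)
    _ ≤ 2 ^ p * (x ^ p + y ^ p) := by gcongr

lemma two_rpow_neg_mul_norm_sub_rpow_le {E : Type*} [SeminormedAddCommGroup E] {s : ℝ}
    (hs : 1 ≤ s) (w v : E) :
    2 ^ (-s) * ‖w - v‖ ^ (s - 1) ≤ (‖w‖ ^ (s - 1) + ‖v‖ ^ (s - 1)) / 2 := by
  have hp : 0 ≤ s - 1 := by linarith
  have h2 : (2 : ℝ) ^ (-s) * 2 ^ (s - 1) = 1 / 2 := by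
    rw [← rpow_add zero_lt_two, show -s + (s - 1) = -1 by ring, rpow_neg_one]
    norm_num
  calc 2 ^ (-s) * ‖w - v‖ ^ (s - 1)
      ≤ 2 ^ (-s) * (2 ^ (s - 1) * (‖w‖ ^ (s - 1) + ‖v‖ ^ (s - 1))) := by
        gcongr
        exact (rpow_le_rpow (norm_nonneg _) (norm_sub_le w v) hp).trans
          (add_rpow_le_two_rpow_mul_add (norm_nonneg w) (norm_nonneg v) hp)
    _ = (‖w‖ ^ (s - 1) + ‖v‖ ^ (s - 1)) / 2 := by rw [← mul_assoc, h2]; ring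

section InnerProductSpace

variable {E : Type*} [NormedAddCommGroup E] [InnerProductSpace ℝ E]

lemma real_inner_smul_sub_smul_sub (a b : ℝ) (w v : E) :
    ⟪a • w - b • v, w - v⟫ = (a + b) / 2 * ‖w - v‖ ^ 2 + (a - b) / 2 * (‖w‖ ^ 2 - ‖v‖ ^ 2) := by
  simp only [norm_sub_sq_real, inner_sub_left, inner_sub_right, real_inner_smul_left,
    real_inner_self_eq_norm_sq, real_inner_comm v w]
  ring

lemma mul_norm_le_norm_of_mul_sq_le_inner {c : ℝ} {x d : E} (h : c * ‖d‖ ^ 2 ≤ ⟪x, d⟫) :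
    c * ‖d‖ ≤ ‖x‖ := by
  rcases (norm_nonneg d).eq_or_lt with hd | hd
  · simp [← hd]
  refine le_of_mul_le_mul_right ?_ hd
  calc c * ‖d‖ * ‖d‖ = c * ‖d‖ ^ 2 := by ring
    _ ≤ ⟪x, d⟫ := h
    _ ≤ ‖x‖ * ‖d‖ := real_inner_le_norm x d

lemma mul_norm_sub_sq_le_inner_rpow_smul_sub {p : ℝ} (hp : 0 ≤ p) (w v : E) :
    (‖w‖ ^ p + ‖v‖ ^ p) / 2 * ‖w - v‖ ^ 2 ≤ ⟪‖w‖ ^ p • w - ‖v‖ ^ p • v, w - v⟫ := by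
  have hmono : 0 ≤ (‖w‖ ^ p - ‖v‖ ^ p) / 2 * (‖w‖ ^ 2 - ‖v‖ ^ 2) := by
    rcases le_total ‖w‖ ‖v‖ with h | h
    · have : ‖w‖ ^ p ≤ ‖v‖ ^ p := rpow_le_rpow (norm_nonneg w) h hp
      have : ‖w‖ ^ 2 ≤ ‖v‖ ^ 2 := by gcongr
      nlinarith
    · have : ‖v‖ ^ p ≤ ‖w‖ ^ p := rpow_le_rpow (norm_nonneg v) h hp
      have : ‖v‖ ^ 2 ≤ ‖w‖ ^ 2 := by gcongr
      nlinarith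
  rw [real_inner_smul_sub_smul_sub]
  linarith

end InnerProductSpace

theorem power_map_increment_lower_bound_general (k : ℕ) (s : ℝ) (hs : 1 ≤ s)
    (w v : EuclideanSpace ℝ (Fin k)) :
    (2 : ℝ) ^ (-s) * ‖w - v‖ ^ s ≤ ‖(‖w‖ ^ (s - 1)) • w - (‖v‖ ^ (s - 1)) • v‖ := by
  have hinner : 2 ^ (-s) * ‖w - v‖ ^ (s - 1) * ‖w - v‖ ^ 2
      ≤ ⟪‖w‖ ^ (s - 1) • w - ‖v‖ ^ (s - 1) • v, w - v⟫ :=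
    (mul_le_mul_of_nonneg_right (two_rpow_neg_mul_norm_sub_rpow_le hs w v) (sq_nonneg _)).trans
      (mul_norm_sub_sq_le_inner_rpow_smul_sub (by linarith) w v)
  have hsplit : ‖w - v‖ ^ s = ‖w - v‖ ^ (s - 1) * ‖w - v‖ := by
    rw [← rpow_add_one' (norm_nonneg _) (by linarith), sub_add_cancel]
  rw [hsplit, ← mul_assoc]
  exact mul_norm_le_norm_of_mul_sq_le_inner hinner

/-- Lower bound for the increment of the power map `α(w) = |w|^{s−1} w` (with `α(0) = 0`):
`||w|^{s−1}w − |v|^{s−1}v| ≥ 2^{−s}|w−v|^s` for `s ≥ 1`. -/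
theorem power_map_increment_lower_bound (k : ℕ) (hk : 1 ≤ k) (s : ℝ) (hs : 1 ≤ s)
    (w v : EuclideanSpace ℝ (Fin k)) :
    (2 : ℝ) ^ (-s) * ‖w - v‖ ^ s ≤ ‖(‖w‖ ^ (s - 1)) • w - (‖v‖ ^ (s - 1)) • v‖ :=
  power_map_increment_lower_bound_general k s hs w v
end
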